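/- arXiv:2003.04107 — 4 statements merged into one kernel-verified Lean document; each statement's English description precedes it below -/
import Mathlib

section
/- Let f, g be continuous functions on the closed unit disc, holomorphic on the open unit disc, both nonconstant, such that for every ζ on the unit circle, max(|f(ζ)|, |g(ζ)|) = 1. Then for any ξ on the unit circle there is no injective sequence ζₙ on the unit circle with f(ζₙ) = ξ for all n such that the sequence g(ζₙ) has a cluster point in the open unit disc. -/
open Complex ComplexConjugate Metric Set Filter Topology
open scoped Interval

/-!
Pass to a subsequence of `ζ` converging to a point `z₀` of the circle. Then `f z₀ = ξ` and
`|g z₀| < 1`, so on an arc of the circle around `z₀` we have `|g| < 1`, hence `|f| = 1`. By the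
Schwarz reflection principle `f` extends holomorphically across this arc, by
`z ↦ 1 / conj (f (1 / conj z))` outside the disc. The extension takes the value `ξ` at the points
of the subsequence, which accumulate at `z₀`, so by the identity theorem `f ≡ ξ`.

Holomorphy of the extension is proved with Morera's theorem: a continuous function that is
holomorphic off the real axis is holomorphic (split each rectangle along the axis), and the
chart `w ↦ z₀ * exp (I * w)` carries this over to the unit circle.
-/

namespace Complex

section Morera

variable {E : Type*} [NormedAddCommGroup E] [NormedSpace ℂ E] {f : ℂ → E}

lemma wedgeIntegral_add_wedgeIntegral_split {z w : ℂ} {t : ℝ} (ht : t ∈ [[z.im, w.im]])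
    (hf : ContinuousOn f (Rectangle z w)) :
    wedgeIntegral z w f + wedgeIntegral w z f =
      (wedgeIntegral z (w.re + t * I) f + wedgeIntegral (w.re + t * I) z f) +
      (wedgeIntegral (z.re + t * I) w f + wedgeIntegral w (z.re + t * I) f) := by
  have hvert : ∀ x ∈ [[z.re, w.re]], ∀ a ∈ [[z.im, w.im]], ∀ b ∈ [[z.im, w.im]],
      IntervalIntegrable (fun y : ℝ => f (↑x + ↑y * I)) MeasureTheory.volume a b := by
    intro x hx a ha b hb
    refine ContinuousOn.intervalIntegrable (hf.comp (by fun_prop) fun y hy => ?_)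
    simpa [Rectangle, mem_reProdIm] using ⟨hx, uIcc_subset_uIcc ha hb hy⟩
  have hz : z.re ∈ [[z.re, w.re]] := left_mem_uIcc
  have hw : w.re ∈ [[z.re, w.re]] := right_mem_uIcc
  simp only [wedgeIntegral_add_wedgeIntegral_eq, add_re, add_im, ofReal_re, ofReal_im, mul_re,
    mul_im, I_re, I_im, mul_zero, mul_one, sub_zero, zero_add, add_zero]
  rw [← intervalIntegral.integral_add_adjacent_intervals (hvert _ hw _ left_mem_uIcc _ ht)
      (hvert _ hw _ ht _ right_mem_uIcc),
    ← intervalIntegral.integral_add_adjacent_intervals (hvert _ hz _ left_mem_uIcc _ ht)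
      (hvert _ hz _ ht _ right_mem_uIcc)]
  simp only [smul_add]
  abel

lemma wedgeIntegral_add_wedgeIntegral_eq_zero_of_differentiableAt_im_ne_zero {z w : ℂ}
    (hc : ContinuousOn f (Rectangle z w))
    (hd : ∀ x ∈ Rectangle z w, x.im ≠ 0 → DifferentiableAt ℂ f x)
    (h0 : (0 : ℝ) ∉ Ioo (min z.im w.im) (max z.im w.im)) :
    wedgeIntegral z w f + wedgeIntegral w z f = 0 := by
  rw [wedgeIntegral_add_wedgeIntegral_eq]
  refine integral_boundary_rect_eq_zero_of_differentiable_on_off_countable f z w ∅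
    countable_empty hc fun x hx => hd x ?_ ?_
  · exact reProdIm_subset_iff.2 (prod_mono Ioo_subset_Icc_self Ioo_subset_Icc_self) hx.1
  · rintro hx0
    exact h0 (hx0 ▸ hx.1.2)

theorem isConservativeOn_of_differentiableAt_im_ne_zero {U : Set ℂ} (hc : ContinuousOn f U)
    (hd : ∀ z ∈ U, z.im ≠ 0 → DifferentiableAt ℂ f z) : IsConservativeOn f U := by
  intro z w hzw
  rw [← add_eq_zero_iff_eq_neg]
  by_cases h0 : (0 : ℝ) ∈ [[z.im, w.im]]
  · have hsub₁ : Rectangle z (w.re + (0 : ℝ) * I) ⊆ U := by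
      refine Subset.trans ?_ hzw
      simpa [Rectangle] using
        reProdIm_subset_iff.2 (prod_mono subset_rfl (uIcc_subset_uIcc_left h0))
    have hsub₂ : Rectangle (z.re + (0 : ℝ) * I) w ⊆ U := by
      refine Subset.trans ?_ hzw
      simpa [Rectangle] using
        reProdIm_subset_iff.2 (prod_mono subset_rfl (uIcc_subset_uIcc_right h0))
    rw [wedgeIntegral_add_wedgeIntegral_split h0 (hc.mono hzw),
      wedgeIntegral_add_wedgeIntegral_eq_zero_of_differentiableAt_im_ne_zero (hc.mono hsub₁)
        (fun x hx => hd x (hsub₁ hx)) (by simpa using le_of_lt),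
      wedgeIntegral_add_wedgeIntegral_eq_zero_of_differentiableAt_im_ne_zero (hc.mono hsub₂)
        (fun x hx => hd x (hsub₂ hx)) (by simpa using le_of_lt), add_zero]
  · exact wedgeIntegral_add_wedgeIntegral_eq_zero_of_differentiableAt_im_ne_zero (hc.mono hzw)
      (fun x hx => hd x (hzw hx)) fun h => h0 (Ioo_subset_Icc_self h)

variable [CompleteSpace E]

theorem differentiableOn_of_differentiableAt_im_ne_zero {U : Set ℂ} (hU : IsOpen U)
    (hc : ContinuousOn f U) (hd : ∀ z ∈ U, z.im ≠ 0 → DifferentiableAt ℂ f z) :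
    DifferentiableOn ℂ f U :=
  (isConservativeOn_and_continuousOn_iff_isDifferentiableOn hU).1
    ⟨isConservativeOn_of_differentiableAt_im_ne_zero hc hd, hc⟩

lemma norm_mul_exp_I_mul_eq_one_iff {z₀ : ℂ} (hz₀ : ‖z₀‖ = 1) (w : ℂ) :
    ‖z₀ * exp (I * w)‖ = 1 ↔ w.im = 0 := by
  simp [norm_exp, hz₀]

lemma mul_exp_I_mul_neg_I_mul_log {z₀ z : ℂ} (hz₀ : z₀ ≠ 0) (hz : z ≠ 0) :
    z₀ * exp (I * (-I * log (z / z₀))) = z := by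
  rw [← mul_assoc, ← neg_mul_eq_mul_neg, I_mul_I, neg_neg, one_mul,
    exp_log (div_ne_zero hz hz₀), mul_div_cancel₀ _ hz₀]

theorem differentiableOn_of_differentiableAt_norm_ne_one {U : Set ℂ} (hU : IsOpen U)
    (hc : ContinuousOn f U) (hd : ∀ z ∈ U, ‖z‖ ≠ 1 → DifferentiableAt ℂ f z) :
    DifferentiableOn ℂ f U := by
  intro z₀ hz₀U
  refine DifferentiableAt.differentiableWithinAt ?_
  rcases ne_or_eq ‖z₀‖ 1 with hz₀ | hz₀
  · exact hd z₀ hz₀U hz₀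
  have hz₀0 : z₀ ≠ 0 := norm_ne_zero_iff.1 (by rw [hz₀]; exact one_ne_zero)
  -- The chart `e` sends the real axis into the unit circle; `z ↦ -I * log (z / z₀)` inverts it.
  set e : ℂ → ℂ := fun w => z₀ * exp (I * w)
  have he : Continuous e := by fun_prop
  have hV : IsOpen (e ⁻¹' U) := hU.preimage he
  have hfe : DifferentiableOn ℂ (f ∘ e) (e ⁻¹' U) :=
    differentiableOn_of_differentiableAt_im_ne_zero hV
      (hc.comp he.continuousOn (mapsTo_preimage _ _)) fun w hw hw0 =>
        (hd _ hw (by rwa [Ne, norm_mul_exp_I_mul_eq_one_iff hz₀])).comp w (by fun_prop)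
  have hlog : DifferentiableAt ℂ (fun z => -I * log (z / z₀)) z₀ := by
    have : DifferentiableAt ℂ log (z₀ / z₀) := by
      rw [div_self hz₀0]; exact differentiableAt_log one_mem_slitPlane
    fun_prop
  have h0 : e (-I * log (z₀ / z₀)) = z₀ := mul_exp_I_mul_neg_I_mul_log hz₀0 hz₀0
  have := (hfe.differentiableAt (hV.mem_nhds (show _ ∈ U by rwa [h0]))).comp z₀ hlog
  refine this.congr_of_eventuallyEq ?_
  filter_upwards [isOpen_ne.mem_nhds hz₀0] with z hz
  exact congrArg f (mul_exp_I_mul_neg_I_mul_log hz₀0 hz).symm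

end Morera

-- Inversion `z ↦ conj z⁻¹` in the unit circle, applied to both the argument and the value.
noncomputable def circleReflection (f : ℂ → ℂ) (z : ℂ) : ℂ :=
  if ‖z‖ ≤ 1 then f z else (conj (f (conj z⁻¹)))⁻¹

section Reflection

variable {f : ℂ → ℂ} {S : Set ℂ}

lemma circleReflection_of_norm_le {z : ℂ} (hz : ‖z‖ ≤ 1) : circleReflection f z = f z :=
  if_pos hz

lemma continuousOn_conj_inv : ContinuousOn (fun z : ℂ => conj z⁻¹) {0}ᶜ :=
  continuous_conj.comp_continuousOn continuousOn_inv₀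

lemma isOpen_inter_preimage_conj_inv (hS : IsOpen S) (hS0 : 0 ∉ S) :
    IsOpen (S ∩ (fun z => conj z⁻¹) ⁻¹' S) :=
  (continuousOn_conj_inv.mono fun _ hz => ne_of_mem_of_not_mem hz hS0).isOpen_inter_preimage
    hS hS

lemma continuousOn_circleReflection (hfc : ContinuousOn f (closedBall 0 1)) (hS0 : 0 ∉ S)
    (hf0 : ∀ z ∈ S, ‖z‖ ≤ 1 → f z ≠ 0) (hf1 : ∀ z ∈ S, ‖z‖ = 1 → ‖f z‖ = 1) :
    ContinuousOn (circleReflection f) (S ∩ (fun z => conj z⁻¹) ⁻¹' S) := by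
  have hball : {z : ℂ | ‖z‖ ≤ 1} = closedBall 0 1 := by ext; simp
  refine ContinuousOn.if ?_ ?_ ?_
  · rintro z ⟨⟨hzS, -⟩, hz⟩
    rw [hball, frontier_closedBall', mem_sphere_zero_iff_norm] at hz
    rw [inv_eq_conj hz, conj_conj, ← inv_eq_conj (hf1 z hzS hz), inv_inv]
  · exact hfc.mono (inter_subset_right.trans (by rw [hball, closure_closedBall]))
  · have hcl : closure {z : ℂ | ¬‖z‖ ≤ 1} ⊆ {z | 1 ≤ ‖z‖} :=
      closure_minimal (fun z hz => (not_le.1 hz).le) (isClosed_le continuous_const continuous_norm)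
    set T := (S ∩ (fun z => conj z⁻¹) ⁻¹' S) ∩ {z | 1 ≤ ‖z‖}
    have hmaps : MapsTo (fun z => conj z⁻¹) T (S ∩ closedBall 0 1) := fun z hz =>
      ⟨hz.1.2, by simpa using inv_le_one_of_one_le₀ (show 1 ≤ ‖z‖ from hz.2)⟩
    have hσ : ContinuousOn (fun z => conj z⁻¹) T :=
      continuousOn_conj_inv.mono fun _ hz => ne_of_mem_of_not_mem hz.1.1 hS0
    refine ContinuousOn.mono ?_ (inter_subset_inter_right _ hcl)
    exact (continuous_conj.comp_continuousOn ((hfc.mono inter_subset_right).comp hσ hmaps)).inv₀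
      fun z hz => (map_ne_zero _).2 (hf0 _ (hmaps hz).1 (mem_closedBall_zero_iff.1 (hmaps hz).2))

lemma differentiableAt_circleReflection (hfd : DifferentiableOn ℂ f (ball 0 1)) (hS0 : 0 ∉ S)
    (hf0 : ∀ z ∈ S, ‖z‖ ≤ 1 → f z ≠ 0) {z : ℂ} (hz : z ∈ S ∩ (fun z => conj z⁻¹) ⁻¹' S)
    (hz1 : ‖z‖ ≠ 1) : DifferentiableAt ℂ (circleReflection f) z := by
  rcases hz1.lt_or_gt with hlt | hgt
  · have hzB : z ∈ ball (0 : ℂ) 1 := mem_ball_zero_iff.2 hlt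
    refine (hfd.differentiableAt (isOpen_ball.mem_nhds hzB)).congr_of_eventuallyEq ?_
    filter_upwards [isOpen_ball.mem_nhds hzB] with y hy
    exact circleReflection_of_norm_le (mem_ball_zero_iff.1 hy).le
  · have hz0 : z ≠ 0 := ne_of_mem_of_not_mem hz.1 hS0
    have hσ : ‖conj z⁻¹‖ < 1 := by simpa using inv_lt_one_of_one_lt₀ hgt
    have hconj : DifferentiableAt ℂ (conj ∘ f ∘ conj) z⁻¹ :=
      differentiableAt_conj_conj_iff.2 (hfd.differentiableAt (isOpen_ball.mem_nhds
        (mem_ball_zero_iff.2 hσ)))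
    refine ((hconj.comp z (differentiableAt_inv hz0)).inv
      ((map_ne_zero _).2 (hf0 _ hz.2 hσ.le))).congr_of_eventuallyEq ?_
    filter_upwards [(isOpen_lt continuous_const continuous_norm).mem_nhds hgt] with y hy
    exact if_neg (not_le.2 hy)

theorem differentiableOn_circleReflection (hfc : ContinuousOn f (closedBall 0 1))
    (hfd : DifferentiableOn ℂ f (ball 0 1)) (hS : IsOpen S) (hS0 : 0 ∉ S)
    (hf0 : ∀ z ∈ S, ‖z‖ ≤ 1 → f z ≠ 0) (hf1 : ∀ z ∈ S, ‖z‖ = 1 → ‖f z‖ = 1) :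
    DifferentiableOn ℂ (circleReflection f) (S ∩ (fun z => conj z⁻¹) ⁻¹' S) :=
  differentiableOn_of_differentiableAt_norm_ne_one (isOpen_inter_preimage_conj_inv hS hS0)
    (continuousOn_circleReflection hfc hS0 hf0 hf1)
    fun _ hz hz1 => differentiableAt_circleReflection hfd hS0 hf0 hz hz1

theorem eqOn_ball_of_frequently_eq_of_norm_eq_one_on_arc
    (hfc : ContinuousOn f (closedBall 0 1)) (hfd : DifferentiableOn ℂ f (ball 0 1)) {z₀ ξ : ℂ}
    {r : ℝ} (hz₀ : ‖z₀‖ = 1) (hr : 0 < r) (hr1 : r ≤ 1) (hf0 : ∀ z ∈ ball z₀ r, ‖z‖ ≤ 1 → f z ≠ 0)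
    (hf1 : ∀ z ∈ ball z₀ r, ‖z‖ = 1 → ‖f z‖ = 1)
    (hfreq : ∃ᶠ z in 𝓝[≠] z₀, ‖z‖ ≤ 1 ∧ f z = ξ) :
    EqOn f (fun _ => ξ) (ball 0 1) := by
  have hS0 : (0 : ℂ) ∉ ball z₀ r := by simpa [hz₀] using hr1
  set U := ball z₀ r ∩ (fun z => conj z⁻¹) ⁻¹' ball z₀ r
  have hU : IsOpen U := isOpen_inter_preimage_conj_inv isOpen_ball hS0
  have hz₀U : z₀ ∈ U := ⟨mem_ball_self hr, by simpa [← inv_eq_conj hz₀] using hr⟩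
  have hh : AnalyticOnNhd ℂ (circleReflection f) U :=
    (differentiableOn_circleReflection hfc hfd isOpen_ball hS0 hf0 hf1).analyticOnNhd hU
  obtain ⟨ε, hε, hεU⟩ := Metric.isOpen_iff.1 hU z₀ hz₀U
  have hW : IsPreconnected (ball (0 : ℂ) 1 ∪ ball z₀ ε) := by
    refine (convex_ball _ _).isPreconnected.union' ?_ (convex_ball _ _).isPreconnected
    have : z₀ ∈ closure (ball (0 : ℂ) 1) := by simp [closure_ball, hz₀]
    simpa [inter_comm] using mem_closure_iff_nhds.1 this _ (ball_mem_nhds z₀ hε)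
  have hhW : AnalyticOnNhd ℂ (circleReflection f) (ball 0 1 ∪ ball z₀ ε) := by
    rintro z (hz | hz)
    · refine (hfd.analyticAt (isOpen_ball.mem_nhds hz)).congr ?_
      filter_upwards [isOpen_ball.mem_nhds hz] with y hy
      exact (circleReflection_of_norm_le (mem_ball_zero_iff.1 hy).le).symm
    · exact hh z (hεU hz)
  have heq := hhW.eqOn_of_preconnected_of_frequently_eq analyticOnNhd_const hW
    (Or.inr (mem_ball_self hε))
    (hfreq.mono fun z hz => (circleReflection_of_norm_le hz.1).trans hz.2)
  intro z hz
  exact (circleReflection_of_norm_le (mem_ball_zero_iff.1 hz).le).symm.trans (heq (Or.inl hz))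

end Reflection

end Complex

theorem exists_subseq_tendsto_nhdsNE_of_mapClusterPt {X Y : Type*} [TopologicalSpace X]
    [FirstCountableTopology X] [TopologicalSpace Y] [FirstCountableTopology Y] {K : Set X}
    (hK : IsCompact K) {u : ℕ → X} (hu : Function.Injective u) (huK : ∀ n, u n ∈ K) {g : X → Y}
    {w : Y} (hw : MapClusterPt w atTop (g ∘ u)) :
    ∃ x ∈ K, ∃ φ : ℕ → ℕ, StrictMono φ ∧ Tendsto (u ∘ φ) atTop (𝓝[≠] x) ∧
      Tendsto (g ∘ u ∘ φ) atTop (𝓝 w) := by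
  obtain ⟨ψ, hψ, hgψ⟩ := hw.tendsto_subseq
  obtain ⟨x, hx, φ, hφ, hlim⟩ := hK.tendsto_subseq fun n => huK (ψ n)
  refine ⟨x, hx, ψ ∘ φ, hψ.comp hφ, tendsto_nhdsWithin_iff.2 ⟨hlim, ?_⟩,
    hgψ.comp hφ.tendsto_atTop⟩
  rw [← Nat.cofinite_eq_atTop]
  exact (hu.comp (hψ.comp hφ).injective).tendsto_cofinite.eventually (eventually_cofinite_ne x)


theorem no_injective_fiber_sequence_with_interior_cluster_general (f g : ℂ → ℂ)
    (hfc : ContinuousOn f (Metric.closedBall (0:ℂ) 1))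
    (hgc : ContinuousOn g (Metric.closedBall (0:ℂ) 1))
    (hfd : DifferentiableOn ℂ f (Metric.ball (0:ℂ) 1))
    (hfnc : ¬ ∃ c : ℂ, ∀ z ∈ Metric.ball (0:ℂ) 1, f z = c)
    (hbd : ∀ ζ ∈ Metric.sphere (0:ℂ) 1,
      max ‖f ζ‖ ‖g ζ‖ = 1) :
    ∀ ξ ∈ Metric.sphere (0:ℂ) 1,
      ¬ ∃ ζ : ℕ → ℂ, Function.Injective ζ ∧
        (∀ n, ζ n ∈ Metric.sphere (0:ℂ) 1) ∧
        (∀ n, f (ζ n) = ξ) ∧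
        ∃ w ∈ Metric.ball (0:ℂ) 1,
          MapClusterPt w Filter.atTop (fun n => g (ζ n)) := by
  rintro ξ hξ ⟨ζ, hinj, hζ, hfζ, w, hw, hclu⟩
  obtain ⟨z₀, hz₀, φ, -, hne, hgw⟩ :=
    exists_subseq_tendsto_nhdsNE_of_mapClusterPt (isCompact_sphere 0 1) hinj hζ hclu
  have hz₀B : z₀ ∈ closedBall (0 : ℂ) 1 := sphere_subset_closedBall hz₀
  have hlimB : Tendsto (ζ ∘ φ) atTop (𝓝[closedBall 0 1] z₀) := tendsto_nhdsWithin_iff.2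
    ⟨hne.mono_right nhdsWithin_le_nhds, .of_forall fun n => sphere_subset_closedBall (hζ _)⟩
  have hfz₀ : f z₀ = ξ :=
    tendsto_nhds_unique ((hfc z₀ hz₀B).tendsto.comp hlimB) (by simp [Function.comp_def, hfζ])
  have hgz₀ : g z₀ = w := tendsto_nhds_unique ((hgc z₀ hz₀B).tendsto.comp hlimB) hgw
  have hnear : ∀ᶠ z in 𝓝[closedBall 0 1] z₀, f z ≠ 0 ∧ ‖g z‖ < 1 := by
    refine ((hfc z₀ hz₀B).eventually_ne ?_).and ((hgc z₀ hz₀B).norm.eventually_lt_const ?_)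
    · rw [hfz₀]; rintro rfl; simp at hξ
    · simpa [hgz₀] using hw
  obtain ⟨r, hr, hrB⟩ := mem_nhdsWithin_iff.1 hnear
  have hball : ∀ z ∈ ball z₀ (min r 1), ‖z‖ ≤ 1 → f z ≠ 0 ∧ ‖g z‖ < 1 := fun z hz hz1 =>
    hrB ⟨ball_subset_ball (min_le_left _ _) hz, mem_closedBall_zero_iff.2 hz1⟩
  have harc : ∀ z ∈ ball z₀ (min r 1), ‖z‖ = 1 → ‖f z‖ = 1 := fun z hz hz1 => by
    have hmax := hbd z (mem_sphere_zero_iff_norm.2 hz1)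
    rcases max_choice ‖f z‖ ‖g z‖ with h | h
    · rwa [h] at hmax
    · exact absurd (h.symm.trans hmax) (hball z hz hz1.le).2.ne
  exact hfnc ⟨ξ, eqOn_ball_of_frequently_eq_of_norm_eq_one_on_arc hfc hfd (by simpa using hz₀)
    (lt_min hr one_pos) (min_le_right _ _) (fun z hz hz1 => (hball z hz hz1).1) harc
    (hne.frequently (.of_forall fun n => ⟨by simpa using (hζ _).le, hfζ _⟩))⟩

theorem no_injective_fiber_sequence_with_interior_cluster (f g : ℂ → ℂ)
    (hfc : ContinuousOn f (Metric.closedBall (0:ℂ) 1))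
    (hgc : ContinuousOn g (Metric.closedBall (0:ℂ) 1))
    (hfd : DifferentiableOn ℂ f (Metric.ball (0:ℂ) 1))
    (hgd : DifferentiableOn ℂ g (Metric.ball (0:ℂ) 1))
    (hfnc : ¬ ∃ c : ℂ, ∀ z ∈ Metric.ball (0:ℂ) 1, f z = c)
    (hgnc : ¬ ∃ c : ℂ, ∀ z ∈ Metric.ball (0:ℂ) 1, g z = c)
    (hbd : ∀ ζ ∈ Metric.sphere (0:ℂ) 1,
      max ‖f ζ‖ ‖g ζ‖ = 1) :
    ∀ ξ ∈ Metric.sphere (0:ℂ) 1,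
      ¬ ∃ ζ : ℕ → ℂ, Function.Injective ζ ∧
        (∀ n, ζ n ∈ Metric.sphere (0:ℂ) 1) ∧
        (∀ n, f (ζ n) = ξ) ∧
        ∃ w ∈ Metric.ball (0:ℂ) 1,
          MapClusterPt w Filter.atTop (fun n => g (ζ n)) :=
  no_injective_fiber_sequence_with_interior_cluster_general f g hfc hgc hfd hfnc hbd
end

section
/- Let f be holomorphic on an open set containing a point z of the unit circle, such that |f(w)| < 1 for w in the open unit disc near z and |f(w)| > 1 for w outside the closed unit disc near z. Then f'(z) ≠ 0. -/
/-!
By continuity `|f(z)| = 1`, so `f` is not constant near `z`, and if `f'(z) = 0` then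
`f(w) = f(z) + (w - z)^k g(w)` near `z` with `k ≥ 2` and `g(z) ≠ 0`. Along a ray `z + εu`,
`|f| > 1` for small `ε > 0` as soon as `Re(conj(f z) g(z) u^k) > 0`, while the ray enters the
disc as soon as `Re(conj(z) u) < 0`. Since `u ↦ u^k` wraps the open half circle
`Re(conj(z) u) < 0` at least once around the circle, both can be achieved at once.
-/

open Filter Topology Metric ComplexConjugate RealInnerProductSpace Real

section InnerProductSpace

variable {E : Type*} [NormedAddCommGroup E] [InnerProductSpace ℝ E]

lemma norm_add_smul_sq (p v : E) (δ : ℝ) :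
    ‖p + δ • v‖ ^ 2 = ‖p‖ ^ 2 + δ * (2 * ⟪p, v⟫ + δ * ‖v‖ ^ 2) := by
  rw [norm_add_sq_real, real_inner_smul_right, norm_smul, Real.norm_eq_abs, mul_pow, sq_abs]
  ring

lemma norm_lt_norm_add_smul_of_inner_pos {p v : E} (hpv : 0 < ⟪p, v⟫) {δ : ℝ} (hδ : 0 < δ) :
    ‖p‖ < ‖p + δ • v‖ := by
  refine lt_of_pow_lt_pow_left₀ 2 (norm_nonneg _) ?_
  rw [norm_add_smul_sq]
  have : 0 < δ * (2 * ⟪p, v⟫ + δ * ‖v‖ ^ 2) := by positivity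
  linarith

lemma eventually_norm_add_smul_lt_of_inner_neg {p v : E} (hpv : ⟪p, v⟫ < 0) :
    ∀ᶠ δ in 𝓝[>] (0 : ℝ), ‖p + δ • v‖ < ‖p‖ := by
  have hsmall : ∀ᶠ δ in 𝓝 (0 : ℝ), δ * ‖v‖ ^ 2 < -2 * ⟪p, v⟫ :=
    (Continuous.tendsto (by fun_prop) 0).eventually
      (eventually_lt_nhds (by rw [zero_mul]; linarith))
  filter_upwards [nhdsWithin_le_nhds hsmall, self_mem_nhdsWithin] with δ hδv (hδ : 0 < δ)
  refine lt_of_pow_lt_pow_left₀ 2 (norm_nonneg _) ?_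
  rw [norm_add_smul_sq]
  nlinarith

end InnerProductSpace

lemma tendsto_add_smul_nhdsGT_zero {E : Type*} [NormedAddCommGroup E] [NormedSpace ℝ E]
    (z u : E) : Tendsto (fun ε : ℝ => z + ε • u) (𝓝[>] 0) (𝓝 z) :=
  (Continuous.tendsto' (by fun_prop) 0 z (by simp)).mono_left nhdsWithin_le_nhds

section NormedSpace

variable {E : Type*} [NormedAddCommGroup E] [NormedSpace ℝ E] {x z : E} {r : ℝ}

lemma nhdsWithin_ball_neBot_of_mem_sphere (hr : r ≠ 0) (hz : z ∈ sphere x r) :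
    (𝓝[ball x r] z).NeBot :=
  mem_closure_iff_nhdsWithin_neBot.1 <| frontier_subset_closure (by rwa [frontier_ball x hr])

lemma nhdsWithin_compl_closedBall_neBot_of_mem_sphere [Nontrivial E] (hz : z ∈ sphere x r) :
    (𝓝[(closedBall x r)ᶜ] z).NeBot :=
  mem_closure_iff_nhdsWithin_neBot.1 <|
    frontier_subset_closure (by rwa [frontier_compl, frontier_closedBall'])

end NormedSpace

lemma ContinuousAt.eq_of_eventually_le_of_eventually_ge {X α : Type*} [TopologicalSpace X]
    [LinearOrder α] [TopologicalSpace α] [OrderClosedTopology α] {φ : X → α} {x : X}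
    {s t : Set X} [(𝓝[s] x).NeBot] [(𝓝[t] x).NeBot] {a : α} (hφ : ContinuousAt φ x)
    (hs : ∀ᶠ y in 𝓝[s] x, φ y ≤ a) (ht : ∀ᶠ y in 𝓝[t] x, a ≤ φ y) : φ x = a :=
  le_antisymm (le_of_tendsto (hφ.tendsto.mono_left nhdsWithin_le_nhds) hs)
    (ge_of_tendsto (hφ.tendsto.mono_left nhdsWithin_le_nhds) ht)

lemma AnalyticAt.exists_eventuallyEq_add_pow_smul_of_deriv_eq_zero {𝕜 E : Type*}
    [NontriviallyNormedField 𝕜] [CharZero 𝕜] [NormedAddCommGroup E] [NormedSpace 𝕜 E]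
    [CompleteSpace E] {f : 𝕜 → E} {z : 𝕜} (hf : AnalyticAt 𝕜 f z) (hd : deriv f z = 0)
    (hnc : ¬ ∀ᶠ w in 𝓝 z, f w = f z) :
    ∃ k, 2 ≤ k ∧ ∃ g : 𝕜 → E, AnalyticAt 𝕜 g z ∧ g z ≠ 0 ∧
      ∀ᶠ w in 𝓝 z, f w = f z + (w - z) ^ k • g w := by
  have htop : analyticOrderAt (f · - f z) z ≠ ⊤ := by
    simpa only [ne_eq, analyticOrderAt_eq_top, sub_eq_zero] using hnc
  obtain ⟨k, hk⟩ := ENat.ne_top_iff_exists.1 htop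
  have hderiv : 1 ≤ analyticOrderAt (deriv f) z :=
    Order.one_le_iff_ne_zero.2 (analyticOrderAt_ne_zero.2 ⟨hf.deriv, hd⟩)
  have h2k : 2 ≤ k := by
    have : ((2 : ℕ) : ℕ∞) ≤ k := by
      rw [hk, ← hf.analyticOrderAt_deriv_add_one]
      exact add_le_add_left hderiv 1
    exact_mod_cast this
  obtain ⟨g, hg, hgz, hfg⟩ := (hf.sub analyticAt_const).analyticOrderAt_eq_natCast.1 hk.symm
  exact ⟨k, h2k, g, hg, hgz, hfg.mono fun w hw => by rw [← hw, Pi.sub_apply, add_sub_cancel]⟩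

lemma eventually_norm_lt_norm_add_smul_of_eventuallyEq {f g : ℂ → ℂ} {z u : ℂ} {k : ℕ}
    (hg : ContinuousAt g z) (hfg : ∀ᶠ w in 𝓝 z, f w = f z + (w - z) ^ k • g w)
    (hu : 0 < ⟪f z, u ^ k * g z⟫) : ∀ᶠ ε in 𝓝[>] (0 : ℝ), ‖f z‖ < ‖f (z + ε • u)‖ := by
  have hlead : ∀ᶠ w in 𝓝 z, 0 < ⟪f z, u ^ k * g w⟫ :=
    (continuousAt_const.inner (continuousAt_const.mul hg)).eventually (eventually_gt_nhds hu)
  have hray := tendsto_add_smul_nhdsGT_zero z u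
  filter_upwards [hray.eventually hfg, hray.eventually hlead, self_mem_nhdsWithin]
    with ε hfε hleadε (hε : 0 < ε)
  have : f (z + ε • u) = f z + ε ^ k • (u ^ k * g (z + ε • u)) := by
    rw [hfε, add_sub_cancel_left, smul_eq_mul, Complex.real_smul, Complex.real_smul]
    push_cast; ring
  rw [this]
  exact norm_lt_norm_add_smul_of_inner_pos hleadε (pow_pos hε k)

lemma Complex.exists_inner_neg_and_inner_pow_pos {k : ℕ} (hk : 2 ≤ k) {z c : ℂ} (hz : z ≠ 0)
    (hc : c ≠ 0) : ∃ u : ℂ, ⟪z, u⟫ < 0 ∧ 0 < ⟪c, u ^ k⟫ := by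
  set d := (-z) ^ k * conj c
  have hd : d ≠ 0 := mul_ne_zero (pow_ne_zero _ (neg_ne_zero.2 hz)) ((map_ne_zero _).2 hc)
  have hk0 : (0 : ℝ) < k := by norm_cast; omega
  -- rotating `-z` by `s` rotates `d` by `k * s = -(2/3) arg d`, leaving the argument `arg d / 3`
  set s : ℝ := -(2 / 3) * arg d / k with hs_def
  have hs : |s| < π / 2 := by
    have : |arg d| ≤ π := abs_le.2 ⟨(neg_pi_lt_arg d).le, arg_le_pi d⟩
    have : (2 : ℝ) ≤ k := by exact_mod_cast hk
    rw [abs_div, abs_mul, Nat.abs_cast, div_lt_iff₀ hk0]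
    norm_num
    nlinarith [pi_pos]
  refine ⟨-z * exp (s * I), ?_, ?_⟩
  · have : -z * exp (s * I) * conj z = ((-‖z‖ ^ 2 : ℝ) : ℂ) * exp (s * I) := by
      rw [mul_right_comm, neg_mul, mul_conj']; push_cast; ring
    rw [Complex.inner, this, re_ofReal_mul, exp_ofReal_mul_I_re]
    have := mul_pos (pow_pos (norm_pos_iff.2 hz) 2) (cos_pos_of_mem_Ioo (abs_lt.1 hs))
    linarith
  · have hks : (k : ℂ) * (s * I) = ((-(2 / 3) * arg d : ℝ) : ℂ) * I := by
      have : (k : ℂ) ≠ 0 := by exact_mod_cast hk0.ne'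
      rw [hs_def]; push_cast; field_simp
    have : (-z * exp (s * I)) ^ k * conj c = ((‖d‖ : ℝ) : ℂ) * exp ((arg d / 3 : ℝ) * I) := by
      calc _ = d * exp (((-(2 / 3) * arg d : ℝ) : ℂ) * I) := by
            rw [mul_pow, ← exp_nat_mul, hks]; ring
        _ = ‖d‖ * exp (arg d * I) * exp (((-(2 / 3) * arg d : ℝ) : ℂ) * I) := by
            rw [norm_mul_exp_arg_mul_I]
        _ = _ := by
            rw [mul_assoc, ← exp_add]; push_cast; ring_nf
    rw [Complex.inner, this, re_ofReal_mul, exp_ofReal_mul_I_re]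
    refine mul_pos (norm_pos_iff.2 hd) (cos_pos_of_mem_Ioo ⟨?_, ?_⟩)
    · linarith [neg_pi_lt_arg d, pi_pos]
    · linarith [arg_le_pi d, pi_pos]

theorem deriv_ne_zero_of_modulus_separation (f : ℂ → ℂ) (z : ℂ)
    (hz : z ∈ Metric.sphere (0:ℂ) 1) (U : Set ℂ) (hU : IsOpen U) (hzU : z ∈ U)
    (hf : DifferentiableOn ℂ f U)
    (hlt : ∀ w ∈ U ∩ Metric.ball (0:ℂ) 1, ‖f w‖ < 1)
    (hgt : ∀ w ∈ U \ Metric.closedBall (0:ℂ) 1, 1 < ‖f w‖) :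
    deriv f z ≠ 0 := by
  intro hderiv
  have hUz : U ∈ 𝓝 z := hU.mem_nhds hzU
  have hz1 : ‖z‖ = 1 := mem_sphere_zero_iff_norm.1 hz
  have hin : ∀ᶠ w in 𝓝[ball 0 1] z, ‖f w‖ < 1 :=
    mem_nhdsWithin_iff_exists_mem_nhds_inter.2 ⟨U, hUz, hlt⟩
  have hout : ∀ᶠ w in 𝓝[(closedBall 0 1)ᶜ] z, 1 < ‖f w‖ :=
    mem_nhdsWithin_iff_exists_mem_nhds_inter.2 ⟨U, hUz, hgt⟩
  have := nhdsWithin_ball_neBot_of_mem_sphere one_ne_zero hz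
  have := nhdsWithin_compl_closedBall_neBot_of_mem_sphere hz
  have hfz : ‖f z‖ = 1 :=
    (hf.continuousOn.continuousAt hUz).norm.eq_of_eventually_le_of_eventually_ge
      (hin.mono fun _ => le_of_lt) (hout.mono fun _ => le_of_lt)
  have hnc : ¬ ∀ᶠ w in 𝓝 z, f w = f z := fun hconst => by
    obtain ⟨w, hw, hw'⟩ := ((hconst.filter_mono nhdsWithin_le_nhds).and hout).exists
    exact (hw ▸ hfz ▸ hw').false
  obtain ⟨k, hk, g, hg, hgz, hfg⟩ :=
    (hf.analyticAt hUz).exists_eventuallyEq_add_pow_smul_of_deriv_eq_zero hderiv hnc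
  obtain ⟨u, hzu, hu⟩ := Complex.exists_inner_neg_and_inner_pow_pos (c := f z * conj (g z)) hk
    (norm_ne_zero_iff.1 (hz1 ▸ one_ne_zero))
    (mul_ne_zero (norm_ne_zero_iff.1 (hfz ▸ one_ne_zero)) ((map_ne_zero _).2 hgz))
  have hu' : 0 < ⟪f z, u ^ k * g z⟫ := by
    convert hu using 1
    simp only [Complex.inner, map_mul, Complex.conj_conj]
    ring_nf
  obtain ⟨ε, hεU, hεin, hεout⟩ := (((tendsto_add_smul_nhdsGT_zero z u).eventually hUz).and
      ((eventually_norm_add_smul_lt_of_inner_neg hzu).and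
        (eventually_norm_lt_norm_add_smul_of_eventuallyEq hg.continuousAt hfg hu'))).exists
  have := hlt _ ⟨hεU, mem_ball_zero_iff.2 (hz1 ▸ hεin)⟩
  linarith
end

section
/- Let F = (f,g) be continuous on the closed unit disc, holomorphic on the open unit disc, with both f and g nonconstant, and F(bΔ) contained in the boundary of the bidisc. Then for every open face Φ of the bidisc, the set F(bΔ) ∩ Φ has no cluster point in Φ. -/
/-!
Suppose `p = (ζ, w)`, `|ζ| = 1`, `|w| < 1`, is a cluster point of `F(bΔ) ∩ ({ζ} × Δ)`. By
compactness of the circle there is `z₀ ∈ bΔ` with `F z₀ = p` at which boundary points `z ≠ z₀`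
with `f z = ζ` accumulate. Near `z₀` the circle is mapped to `|g| < 1`, hence `|f| = 1` there.
In the chart `u ↦ z₀ exp (i u)`, which sends the real axis onto the circle and the upper
half-plane into the disc, `f` extends across the axis by the reflection `u ↦ 1 / conj f(conj u)`;
the extension is continuous and holomorphic off the axis, hence holomorphic by Morera's theorem.
It takes the value `ζ` on a set accumulating at `0`, so it is `≡ ζ` near `0`, and then `f ≡ ζ`
on an open piece of the disc, hence on the whole disc. The other faces are symmetric.
-/

open Complex Set Filter Topology Metric intervalIntegral
open scoped Interval ComplexConjugate

theorem AccPt.exists_frequently_mem_of_image {X Y : Type*} [TopologicalSpace X] [T2Space X]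
    [TopologicalSpace Y] [T2Space Y] {F : X → Y} {K S : Set X} {p : Y} (hK : IsCompact K)
    (hF : ContinuousOn F K) (hSK : S ⊆ K) (hp : AccPt p (𝓟 (F '' S))) :
    ∃ x ∈ K, F x = p ∧ ∃ᶠ z in 𝓝[≠] x, z ∈ S := by
  set T := S \ F ⁻¹' {p}
  have hTK : closure T ⊆ K := closure_minimal (sdiff_subset.trans hSK) hK.isClosed
  have hp' : p ∈ F '' closure T := by
    have hcl : IsClosed (F '' closure T) :=
      ((hK.of_isClosed_subset isClosed_closure hTK).image_of_continuousOn (hF.mono hTK)).isClosed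
    refine closure_minimal (image_mono subset_closure) hcl ?_
    rw [image_sdiff_preimage, mem_closure_iff_clusterPt, ← accPt_principal_iff_clusterPt]
    exact hp
  obtain ⟨x, hxT, rfl⟩ := hp'
  refine ⟨x, hTK hxT, rfl, ?_⟩
  rw [frequently_nhdsWithin_iff]
  refine (mem_closure_iff_frequently.1 hxT).mono fun z ⟨hzS, hzp⟩ => ⟨hzS, ?_⟩
  rintro rfl
  exact hzp rfl

theorem norm_eq_one_or_of_mem_frontier {E F : Type*} [NormedAddCommGroup E] [NormedSpace ℝ E]
    [NormedAddCommGroup F] [NormedSpace ℝ F] {p : E × F}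
    (hp : p ∈ frontier {p : E × F | ‖p.1‖ < 1 ∧ ‖p.2‖ < 1}) : ‖p.1‖ = 1 ∨ ‖p.2‖ = 1 := by
  have : {p : E × F | ‖p.1‖ < 1 ∧ ‖p.2‖ < 1} = ball 0 1 ×ˢ ball 0 1 := by
    ext; simp
  rw [this, frontier_prod_eq, frontier_ball _ one_ne_zero, frontier_ball _ one_ne_zero] at hp
  rcases hp with ⟨-, hp⟩ | ⟨hp, -⟩
  · exact Or.inr (mem_sphere_zero_iff_norm.1 hp)
  · exact Or.inl (mem_sphere_zero_iff_norm.1 hp)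

theorem AnalyticOnNhd.eqOn_const_of_eventually_eq_of_mem_closure {𝕜 E F : Type*}
    [NontriviallyNormedField 𝕜] [NormedAddCommGroup E] [NormedSpace 𝕜 E] [NormedAddCommGroup F]
    [NormedSpace 𝕜 F] {f : E → F} {U : Set E} {z₀ : E} {c : F} (hf : AnalyticOnNhd 𝕜 f U)
    (hU : IsOpen U) (hUc : IsPreconnected U) (hz₀ : z₀ ∈ closure U)
    (h : ∀ᶠ z in 𝓝 z₀, z ∈ U → f z = c) : EqOn f (fun _ => c) U := by
  obtain ⟨t, ht, hto, hz₀t⟩ := _root_.eventually_nhds_iff.1 h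
  obtain ⟨z₁, hz₁t, hz₁U⟩ := mem_closure_iff.1 hz₀ t hto hz₀t
  refine hf.eqOn_of_preconnected_of_eventuallyEq analyticOnNhd_const hUc hz₁U ?_
  filter_upwards [(hto.inter hU).mem_nhds ⟨hz₁t, hz₁U⟩] with z ⟨hzt, hzU⟩ using ht z hzt hzU

namespace Complex

variable {E : Type*} [NormedAddCommGroup E] [NormedSpace ℂ E] {G : ℂ → E} {z w : ℂ}

theorem wedgeIntegral_add_wedgeIntegral_eq_split (hG : ContinuousOn G (Rectangle z w)) {t : ℝ}
    (ht : t ∈ [[z.im, w.im]]) :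
    wedgeIntegral z w G + wedgeIntegral w z G =
      (wedgeIntegral z ⟨w.re, t⟩ G + wedgeIntegral ⟨w.re, t⟩ z G) +
        (wedgeIntegral ⟨z.re, t⟩ w G + wedgeIntegral w ⟨z.re, t⟩ G) := by
  have hvert : ∀ x ∈ [[z.re, w.re]], ∀ a ∈ [[z.im, w.im]], ∀ b ∈ [[z.im, w.im]],
      IntervalIntegrable (fun y : ℝ => G (↑x + ↑y * I)) MeasureTheory.volume a b := by
    intro x hx a ha b hb
    refine (hG.comp (by fun_prop) fun y hy => ?_).intervalIntegrable
    exact ⟨by simpa using hx, by simpa using uIcc_subset_uIcc ha hb hy⟩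
  have hz := hvert z.re left_mem_uIcc
  have hw := hvert w.re right_mem_uIcc
  simp only [wedgeIntegral]
  rw [← integral_add_adjacent_intervals (hw _ left_mem_uIcc _ ht) (hw _ ht _ right_mem_uIcc),
    ← integral_add_adjacent_intervals (hz _ right_mem_uIcc _ ht) (hz _ ht _ left_mem_uIcc),
    integral_symm (f := fun x : ℝ => G (↑x + ↑t * I)) w.re z.re]
  simp only [smul_add]
  abel

theorem wedgeIntegral_add_wedgeIntegral_eq_zero_of_zero_notMem
    (hG : ContinuousOn G (Rectangle z w))
    (hd : ∀ u ∈ Rectangle z w, u.im ≠ 0 → DifferentiableAt ℂ G u)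
    (h0 : (0 : ℝ) ∉ Ioo (min z.im w.im) (max z.im w.im)) :
    wedgeIntegral z w G + wedgeIntegral w z G = 0 := by
  rw [wedgeIntegral_add_wedgeIntegral_eq]
  exact integral_boundary_rect_eq_zero_of_differentiable_on_off_countable G z w ∅
    countable_empty hG fun u ⟨⟨hre, him⟩, _⟩ =>
      hd u ⟨Ioo_subset_Icc_self hre, Ioo_subset_Icc_self him⟩ fun hu => h0 (hu ▸ him)

theorem isConservativeOn_of_differentiableAt_of_im_ne_zero {U : Set ℂ} (hG : ContinuousOn G U)
    (hd : ∀ u ∈ U, u.im ≠ 0 → DifferentiableAt ℂ G u) : IsConservativeOn G U := by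
  intro z w hzw
  rw [← add_eq_zero_iff_eq_neg]
  have hzero : ∀ {z' w' : ℂ}, Rectangle z' w' ⊆ U →
      (0 : ℝ) ∉ Ioo (min z'.im w'.im) (max z'.im w'.im) →
      wedgeIntegral z' w' G + wedgeIntegral w' z' G = 0 := fun h h0 =>
    wedgeIntegral_add_wedgeIntegral_eq_zero_of_zero_notMem (hG.mono h) (fun u hu => hd u (h hu)) h0
  by_cases h0 : (0 : ℝ) ∈ Ioo (min z.im w.im) (max z.im w.im)
  · have h0' : (0 : ℝ) ∈ [[z.im, w.im]] := Ioo_subset_Icc_self h0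
    rw [wedgeIntegral_add_wedgeIntegral_eq_split (hG.mono hzw) h0', hzero, hzero, add_zero]
    · exact fun u hu => hzw ⟨hu.1, uIcc_subset_uIcc_right h0' hu.2⟩
    · grind
    · exact fun u hu => hzw ⟨hu.1, uIcc_subset_uIcc_left h0' hu.2⟩
    · grind
  · exact hzero hzw h0

theorem differentiableOn_of_differentiableAt_of_im_ne_zero [CompleteSpace E] {U : Set ℂ}
    (hU : IsOpen U) (hG : ContinuousOn G U) (hd : ∀ u ∈ U, u.im ≠ 0 → DifferentiableAt ℂ G u) :
    DifferentiableOn ℂ G U :=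
  (isConservativeOn_and_continuousOn_iff_isDifferentiableOn hU).1
    ⟨isConservativeOn_of_differentiableAt_of_im_ne_zero hG hd, hG⟩

end Complex

noncomputable def unimodularReflection (A : ℂ → ℂ) (u : ℂ) : ℂ :=
  if 0 ≤ u.im then A u else conj (A (conj u))⁻¹

theorem differentiableOn_unimodularReflection {A : ℂ → ℂ} {U : Set ℂ} (hU : IsOpen U)
    (hUc : ∀ u ∈ U, conj u ∈ U) (hc : ContinuousOn A (U ∩ {u | 0 ≤ u.im}))
    (hd : ∀ u ∈ U, 0 < u.im → DifferentiableAt ℂ A u) (hne : ∀ u ∈ U, 0 < u.im → A u ≠ 0)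
    (hunit : ∀ u ∈ U, u.im = 0 → ‖A u‖ = 1) :
    DifferentiableOn ℂ (unimodularReflection A) U := by
  have hne' : ∀ u ∈ U, 0 ≤ u.im → A u ≠ 0 := fun u hu him => by
    rcases him.lt_or_eq with him | him
    · exact hne u hu him
    · exact norm_ne_zero_iff.1 (by rw [hunit u hu him.symm]; exact one_ne_zero)
  refine differentiableOn_of_differentiableAt_of_im_ne_zero hU ?_ fun u hu him => ?_
  · refine ContinuousOn.if (fun u ⟨hu, hfr⟩ => ?_) ?_ ?_
    · have him : u.im = 0 := (frontier_le_subset_eq continuous_const continuous_im hfr).symm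
      rw [Complex.conj_eq_iff_im.2 him, inv_eq_conj (hunit u hu him), conj_conj]
    · rw [(isClosed_le continuous_const continuous_im).closure_eq]
      exact hc
    · have hcl : closure {u : ℂ | ¬ 0 ≤ u.im} ⊆ {u | u.im ≤ 0} := by
        simpa only [not_le] using closure_lt_subset_le continuous_im continuous_const
      have hconj : MapsTo conj (U ∩ closure {u : ℂ | ¬ 0 ≤ u.im}) (U ∩ {u | 0 ≤ u.im}) :=
        fun u ⟨hu, hul⟩ => ⟨hUc u hu, by simpa using hcl hul⟩
      exact continuous_conj.comp_continuousOn <|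
        (hc.comp continuous_conj.continuousOn hconj).inv₀ fun u hu => hne' _ (hconj hu).1 (hconj hu).2
  · rcases him.lt_or_gt with him | him
    · have : unimodularReflection A =ᶠ[𝓝 u] conj ∘ (fun v => (A v)⁻¹) ∘ conj := by
        filter_upwards [(isOpen_lt continuous_im continuous_const).mem_nhds him] with v hv
        simp [unimodularReflection, not_le.2 hv]
      rw [this.differentiableAt_iff, ← conj_conj u]
      apply DifferentiableAt.conj_conj
      have hu' : 0 < (conj u).im := by simpa using him
      exact (hd _ (hUc u hu) hu').inv (hne _ (hUc u hu) hu')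
    · have : unimodularReflection A =ᶠ[𝓝 u] A := by
        filter_upwards [(isOpen_lt continuous_const continuous_im).mem_nhds him] with v hv
        simp [unimodularReflection, hv.le]
      exact this.differentiableAt_iff.2 (hd u hu him)

section CircleChart

variable {z₀ : ℂ}

theorem norm_mul_exp_mul_I (hz₀ : ‖z₀‖ = 1) (u : ℂ) : ‖z₀ * exp (u * I)‖ = Real.exp (-u.im) := by
  simp [norm_exp, hz₀]

theorem mul_exp_neg_I_mul_log_div_mul_I (hz₀ : z₀ ≠ 0) {z : ℂ} (hz : z ≠ 0) :
    z₀ * exp (-I * log (z / z₀) * I) = z := by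
  rw [show -I * log (z / z₀) * I = log (z / z₀) by ring_nf; simp, exp_log (div_ne_zero hz hz₀),
    mul_div_cancel₀ _ hz₀]

theorem im_neg_I_mul_log_div (hz₀ : ‖z₀‖ = 1) (z : ℂ) :
    (-I * log (z / z₀)).im = -Real.log ‖z‖ := by
  simp [log_re, hz₀]

theorem analyticAt_unimodularReflection_comp_exp {f : ℂ → ℂ}
    (hc : ContinuousOn f (closedBall 0 1)) (hd : DifferentiableOn ℂ f (ball 0 1))
    (hz₀ : z₀ ∈ sphere (0 : ℂ) 1) (hunit : ∀ᶠ z in 𝓝[sphere 0 1] z₀, ‖f z‖ = 1) :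
    AnalyticAt ℂ (unimodularReflection fun u => f (z₀ * exp (u * I))) 0 := by
  set E : ℂ → ℂ := fun u => z₀ * exp (u * I)
  have hnormE := norm_mul_exp_mul_I (mem_sphere_zero_iff_norm.1 hz₀)
  have hEc : Continuous E := by fun_prop
  have hEup : MapsTo E {u | 0 ≤ u.im} (closedBall 0 1) := fun u (hu : 0 ≤ u.im) => by
    rw [mem_closedBall_zero_iff, hnormE, Real.exp_le_one_iff, neg_nonpos]; exact hu
  have hEreal : MapsTo E {u | u.im = 0} (sphere 0 1) := fun u (hu : u.im = 0) => by
    rw [mem_sphere_zero_iff_norm, hnormE, hu, neg_zero, Real.exp_zero]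
  have hnear : ∀ᶠ u in 𝓝 0, (0 < u.im → f (E u) ≠ 0) ∧ (u.im = 0 → ‖f (E u)‖ = 1) := by
    have hne := (hc z₀ (sphere_subset_closedBall hz₀)).eventually_ne
      (norm_ne_zero_iff.1 (by rw [hunit.self_of_nhdsWithin hz₀]; exact one_ne_zero))
    have hE0 : E 0 = z₀ := by simp [E]
    rw [← hE0] at hne hunit
    have h1 := eventually_nhdsWithin_iff.1
      ((hEc.continuousWithinAt.tendsto_nhdsWithin hEup).eventually hne)
    have h2 := eventually_nhdsWithin_iff.1
      ((hEc.continuousWithinAt.tendsto_nhdsWithin hEreal).eventually hunit)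
    filter_upwards [h1, h2] with u h1 h2 using ⟨fun hu => h1 hu.le, h2⟩
  obtain ⟨δ, hδ, hball⟩ := Metric.eventually_nhds_iff_ball.1 hnear
  refine DifferentiableOn.analyticAt ?_ (ball_mem_nhds 0 hδ)
  refine differentiableOn_unimodularReflection isOpen_ball (fun u hu => by simpa using hu)
    (hc.comp hEc.continuousOn fun u hu => hEup hu.2) (fun u _ hu => ?_)
    (fun u hu => (hball u hu).1) fun u hu => (hball u hu).2
  have hEu : E u ∈ ball 0 1 := by
    rw [mem_ball_zero_iff, hnormE, Real.exp_lt_one_iff, neg_lt_zero]; exact hu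
  exact (hd.differentiableAt (isOpen_ball.mem_nhds hEu)).comp u (by fun_prop)

end CircleChart

theorem eventually_eq_of_frequently_eq_on_sphere {f : ℂ → ℂ}
    (hc : ContinuousOn f (closedBall 0 1)) (hd : DifferentiableOn ℂ f (ball 0 1)) {z₀ : ℂ}
    (hz₀ : z₀ ∈ sphere (0 : ℂ) 1) (hunit : ∀ᶠ z in 𝓝[sphere 0 1] z₀, ‖f z‖ = 1)
    (hfreq : ∃ᶠ z in 𝓝[≠] z₀, z ∈ sphere (0 : ℂ) 1 ∧ f z = f z₀) :
    ∀ᶠ z in 𝓝 z₀, z ∈ closedBall (0 : ℂ) 1 → f z = f z₀ := by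
  have hz₀1 : ‖z₀‖ = 1 := mem_sphere_zero_iff_norm.1 hz₀
  have hz₀0 : z₀ ≠ 0 := ne_of_mem_sphere hz₀ one_ne_zero
  set G := unimodularReflection fun u => f (z₀ * exp (u * I))
  -- `Λ` inverts the chart `u ↦ z₀ * exp (u * I)`: it maps the circle to the real axis and the
  -- disc to the upper half-plane, where `G` is `f` read in the chart.
  set Λ : ℂ → ℂ := fun z => -I * log (z / z₀)
  have hGΛ : ∀ z, z ≠ 0 → ‖z‖ ≤ 1 → G (Λ z) = f z := fun z hz hz1 => by
    have him : 0 ≤ (Λ z).im := by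
      rw [im_neg_I_mul_log_div hz₀1, neg_nonneg]; exact Real.log_nonpos (norm_nonneg z) hz1
    simp only [G, unimodularReflection, if_pos him, Λ, mul_exp_neg_I_mul_log_div_mul_I hz₀0 hz]
  have hΛ : Tendsto Λ (𝓝 z₀) (𝓝 0) := by
    have hΛc : ContinuousAt Λ z₀ :=
      continuousAt_const.mul (ContinuousAt.clog (by fun_prop) (by simp [div_self hz₀0]))
    simpa [Λ, div_self hz₀0] using hΛc.tendsto
  have hGeq : ∀ᶠ u in 𝓝 0, G u = f z₀ := by
    have hGan := analyticAt_unimodularReflection_comp_exp hc hd hz₀ hunit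
    refine (hGan.frequently_eq_iff_eventually_eq analyticAt_const).1 ?_
    rw [frequently_nhdsWithin_iff] at hfreq ⊢
    refine hΛ.frequently_map Λ ?_ hfreq
    rintro z ⟨⟨hz, hfz⟩, hzz₀⟩
    have hz0 : z ≠ 0 := ne_of_mem_sphere hz one_ne_zero
    refine ⟨(hGΛ z hz0 (mem_sphere_zero_iff_norm.1 hz).le).trans hfz, fun h => hzz₀ ?_⟩
    rw [← mul_exp_neg_I_mul_log_div_mul_I hz₀0 hz0, show -I * log (z / z₀) = Λ z from rfl, h]
    simp
  filter_upwards [hΛ.eventually hGeq, eventually_ne_nhds hz₀0] with z hz hz0 hzb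
  rw [← hGΛ z hz0 (mem_closedBall_zero_iff.1 hzb), hz]

theorem eventually_ne_on_sphere_of_eventually_norm_eq_one {f : ℂ → ℂ}
    (hc : ContinuousOn f (closedBall 0 1)) (hd : DifferentiableOn ℂ f (ball 0 1))
    (hnc : ¬ ∃ c : ℂ, ∀ z ∈ ball (0 : ℂ) 1, f z = c) {z₀ : ℂ} (hz₀ : z₀ ∈ sphere (0 : ℂ) 1)
    (hunit : ∀ᶠ z in 𝓝[sphere 0 1] z₀, ‖f z‖ = 1) :
    ∀ᶠ z in 𝓝[≠] z₀, z ∈ sphere (0 : ℂ) 1 → f z ≠ f z₀ := by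
  by_contra h
  simp only [not_eventually, Classical.not_imp, not_not] at h
  have hz₀' : z₀ ∈ closure (ball (0 : ℂ) 1) := by
    rw [closure_ball _ one_ne_zero]; exact sphere_subset_closedBall hz₀
  refine hnc ⟨f z₀, fun z hz => ?_⟩
  refine (hd.analyticOnNhd isOpen_ball).eqOn_const_of_eventually_eq_of_mem_closure isOpen_ball
    (convex_ball 0 1).isPreconnected hz₀' ?_ hz
  filter_upwards [eventually_eq_of_frequently_eq_on_sphere hc hd hz₀ hunit h] with z hz hzb
    using hz (ball_subset_closedBall hzb)

theorem eventually_ne_on_sphere_of_norm_lt_one {f g : ℂ → ℂ}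
    (hcf : ContinuousOn f (closedBall 0 1)) (hcg : ContinuousOn g (closedBall 0 1))
    (hdf : DifferentiableOn ℂ f (ball 0 1)) (hfnc : ¬ ∃ c : ℂ, ∀ z ∈ ball (0 : ℂ) 1, f z = c)
    (hbd : ∀ z ∈ sphere (0 : ℂ) 1, ‖f z‖ = 1 ∨ ‖g z‖ = 1) {z₀ : ℂ}
    (hz₀ : z₀ ∈ sphere (0 : ℂ) 1) (hgz₀ : ‖g z₀‖ < 1) :
    ∀ᶠ z in 𝓝[≠] z₀, z ∈ sphere (0 : ℂ) 1 → f z ≠ f z₀ := by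
  refine eventually_ne_on_sphere_of_eventually_norm_eq_one hcf hdf hfnc hz₀ ?_
  have hg := ((hcg z₀ (sphere_subset_closedBall hz₀)).mono sphere_subset_closedBall).norm
    |>.eventually (gt_mem_nhds hgz₀)
  filter_upwards [hg, self_mem_nhdsWithin] with z hgz hz
  exact (hbd z hz).resolve_right hgz.ne

theorem no_cluster_point_in_open_face (f g : ℂ → ℂ)
    (hc : ContinuousOn (fun z => (f z, g z)) (Metric.closedBall (0:ℂ) 1))
    (hd : DifferentiableOn ℂ (fun z => (f z, g z)) (Metric.ball (0:ℂ) 1))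
    (hfnc : ¬ ∃ c : ℂ, ∀ z ∈ Metric.ball (0:ℂ) 1, f z = c)
    (hgnc : ¬ ∃ c : ℂ, ∀ z ∈ Metric.ball (0:ℂ) 1, g z = c)
    (hbd : ∀ z ∈ Metric.sphere (0:ℂ) 1,
      (f z, g z) ∈ frontier {p : ℂ × ℂ | ‖p.1‖ < 1 ∧ ‖p.2‖ < 1}) :
    ∀ Φ : Set (ℂ × ℂ),
      ((∃ ζ ∈ Metric.sphere (0:ℂ) 1, Φ = ({ζ} : Set ℂ) ×ˢ Metric.ball (0:ℂ) 1) ∨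
       (∃ ζ ∈ Metric.sphere (0:ℂ) 1, Φ = Metric.ball (0:ℂ) 1 ×ˢ ({ζ} : Set ℂ))) →
      ∀ p ∈ Φ, ¬ AccPt p (Filter.principal
        ((fun z => (f z, g z)) '' Metric.sphere (0:ℂ) 1 ∩ Φ)) := by
  intro Φ hΦ p hpΦ hacc
  have hcf : ContinuousOn f (closedBall 0 1) := continuous_fst.comp_continuousOn hc
  have hcg : ContinuousOn g (closedBall 0 1) := continuous_snd.comp_continuousOn hc
  have hbd' : ∀ z ∈ sphere (0 : ℂ) 1, ‖f z‖ = 1 ∨ ‖g z‖ = 1 := fun z hz =>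
    norm_eq_one_or_of_mem_frontier (hbd z hz)
  rw [← image_inter_preimage] at hacc
  obtain ⟨x, hx, rfl, hfreq⟩ := hacc.exists_frequently_mem_of_image (isCompact_sphere 0 1)
    (hc.mono sphere_subset_closedBall) inter_subset_left
  rcases hΦ with ⟨ζ, -, rfl⟩ | ⟨ζ, -, rfl⟩
  · obtain ⟨hfx, hgx⟩ := hpΦ
    have hev := eventually_ne_on_sphere_of_norm_lt_one hcf hcg hd.fst hfnc hbd' hx
      (mem_ball_zero_iff.1 hgx)
    obtain ⟨z, ⟨hz, hfz, -⟩, hne⟩ := (hfreq.and_eventually hev).exists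
    exact hne hz (hfz.trans hfx.symm)
  · obtain ⟨hfx, hgx⟩ := hpΦ
    have hev := eventually_ne_on_sphere_of_norm_lt_one hcg hcf hd.snd hgnc
      (fun z hz => (hbd' z hz).symm) hx (mem_ball_zero_iff.1 hfx)
    obtain ⟨z, ⟨hz, -, hgz⟩, hne⟩ := (hfreq.and_eventually hev).exists
    exact hne hz (hgz.trans hgx.symm)
end

section
/- Let f be holomorphic on an open connected set U containing an open arc J of the unit circle, with |f| < 1 on U ∩ Δ and |f| > 1 on U ∖ closure(Δ). Then f restricted to J is locally injective, i.e., every point of J has an open neighborhood in ℂ on which f is injective. -/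
/-!
Fix `z ∈ J`. Approaching `z` from inside and from outside gives `‖f z‖ = 1`, and the
points inside the disc near `z` show that `f` is not constant near `z`. If `f' z = 0`, then
`f w = f z + (w - z) ^ n * h w` with `n ≥ 2` and `h z ≠ 0`. Along a ray `z + t z e` with
`re e > 0`, which leaves the closed disc, `‖f‖ > 1`; to first order in `t ^ n` this says
`re (C e ^ n) ≥ 0` with `C = conj (f z) z ^ n h z ≠ 0`. Since `n ≥ 2`, `e ^ n` takes every direction
except possibly the negative axis, which forces `C = 0`. So `f' z ≠ 0`, and the inverse function
theorem makes `f` injective near `z`.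
-/

open Complex Filter Metric Set
open scoped Real Topology ComplexConjugate

theorem inner_nonneg_of_norm_le_norm_add_smul {α E : Type*} [NormedAddCommGroup E]
    [InnerProductSpace ℝ E] {l : Filter α} [l.NeBot] {s : α → ℝ} {x : α → E} {a L : E}
    (hs : Tendsto s l (𝓝 0)) (hs_pos : ∀ᶠ i in l, 0 < s i) (hx : Tendsto x l (𝓝 L))
    (hle : ∀ᶠ i in l, ‖a‖ ≤ ‖a + s i • x i‖) :
    0 ≤ inner ℝ a L := by
  have hlim : Tendsto (fun i => 2 * inner ℝ a (x i) + s i * ‖x i‖ ^ 2) l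
      (𝓝 (2 * inner ℝ a L + 0 * ‖L‖ ^ 2)) :=
    (tendsto_const_nhds.mul (tendsto_const_nhds.inner hx)).add (hs.mul (hx.norm.pow 2))
  have hnonneg : ∀ᶠ i in l, 0 ≤ 2 * inner ℝ a (x i) + s i * ‖x i‖ ^ 2 := by
    filter_upwards [hs_pos, hle] with i hpos hi
    have hsq : ‖a + s i • x i‖ ^ 2
        = ‖a‖ ^ 2 + s i * (2 * inner ℝ a (x i) + s i * ‖x i‖ ^ 2) := by
      rw [norm_add_sq_real, real_inner_smul_right, norm_smul, Real.norm_of_nonneg hpos.le]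
      ring
    have : ‖a‖ ^ 2 ≤ ‖a + s i • x i‖ ^ 2 := pow_le_pow_left₀ (norm_nonneg a) hi 2
    nlinarith
  linarith [ge_of_tendsto hlim hnonneg]

theorem Complex.eq_zero_of_re_mul_pow_nonneg {C : ℂ} {n : ℕ} (hn : 2 ≤ n)
    (h : ∀ e : ℂ, 0 < e.re → 0 ≤ (C * e ^ n).re) : C = 0 := by
  -- `e = exp (i φ / n)` has positive real part and `e ^ n = exp (i φ)`.
  have hcirc : ∀ φ ∈ Ioo (-π) π, 0 ≤ C.re * Real.cos φ - C.im * Real.sin φ := by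
    rintro φ ⟨hφl, hφr⟩
    have hn' : (2 : ℝ) ≤ n := by exact_mod_cast hn
    have hpow : exp (↑(φ / n) * I) ^ n = exp (φ * I) := by
      have hn0 : (n : ℂ) ≠ 0 := by exact_mod_cast (show n ≠ 0 by omega)
      rw [← exp_nat_mul]; congr 1; push_cast; field_simp
    have hre : 0 < (exp (↑(φ / n) * I)).re := by
      rw [exp_ofReal_mul_I_re]
      apply Real.cos_pos_of_mem_Ioo
      constructor
      · rw [lt_div_iff₀ (by positivity)]; nlinarith [Real.pi_pos]
      · rw [div_lt_iff₀ (by positivity)]; nlinarith [Real.pi_pos]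
    have := h _ hre
    rw [hpow, mul_re, exp_ofReal_mul_I_re, exp_ofReal_mul_I_im] at this
    linarith
  have hπ := Real.pi_pos
  have h0 := hcirc 0 ⟨by linarith, hπ⟩
  have hhalf := hcirc (π / 2) ⟨by linarith, by linarith⟩
  have hneg_half := hcirc (-(π / 2)) ⟨by linarith, by linarith⟩
  have hobtuse := hcirc (2 * π / 3) ⟨by linarith, by linarith⟩
  have hcos : Real.cos (2 * π / 3) < 0 :=
    Real.cos_neg_of_pi_div_two_lt_of_lt (by linarith) (by linarith)
  simp only [Real.cos_zero, Real.sin_zero, Real.cos_pi_div_two, Real.sin_pi_div_two,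
    Real.cos_neg, Real.sin_neg] at h0 hhalf hneg_half
  have him : C.im = 0 := by linarith
  rw [him] at hobtuse
  have hre : C.re = 0 := by nlinarith
  exact Complex.ext hre him

theorem nhdsWithin_ball_neBot_of_mem_sphere_s12 {E : Type*} [NormedAddCommGroup E]
    [NormedSpace ℝ E] {c x : E} {r : ℝ} (hr : r ≠ 0) (hx : x ∈ sphere c r) :
    (𝓝[ball c r] x).NeBot :=
  mem_closure_iff_nhdsWithin_neBot.1 <| by
    rw [closure_ball c hr]; exact sphere_subset_closedBall hx

theorem nhdsWithin_compl_closedBall_neBot_of_mem_sphere_s12 {E : Type*} [NormedAddCommGroup E]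
    [NormedSpace ℝ E] {c x : E} {r : ℝ} (hr : r ≠ 0) (hx : x ∈ sphere c r) :
    (𝓝[(closedBall c r)ᶜ] x).NeBot :=
  mem_closure_iff_nhdsWithin_neBot.1 <| by
    rw [closure_compl, interior_closedBall c hr, mem_compl_iff, mem_ball, not_lt]
    exact (mem_sphere.1 hx).ge

theorem HasStrictDerivAt.exists_isOpen_mem_subset_injOn {𝕜 : Type*} [NontriviallyNormedField 𝕜]
    [CompleteSpace 𝕜] {f : 𝕜 → 𝕜} {f' a : 𝕜} {U : Set 𝕜} (hf : HasStrictDerivAt f f' a)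
    (hf' : f' ≠ 0) (hU : U ∈ 𝓝 a) : ∃ V, IsOpen V ∧ a ∈ V ∧ V ⊆ U ∧ InjOn f V := by
  obtain ⟨V, hV, hVo, haV⟩ := _root_.eventually_nhds_iff.1 ((hf.eventually_left_inverse hf').and hU)
  refine ⟨V, hVo, haV, fun x hx => (hV x hx).2, fun x hx y hy hxy => ?_⟩
  rw [← (hV x hx).1, hxy, (hV y hy).1]

section ModulusSeparation

variable {f : ℂ → ℂ} {z : ℂ}

theorem norm_eq_one_of_modulus_separation (hf : ContinuousAt f z) (hz : ‖z‖ = 1)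
    (hlt : ∀ᶠ w in 𝓝[ball 0 1] z, ‖f w‖ < 1)
    (hgt : ∀ᶠ w in 𝓝[(closedBall 0 1)ᶜ] z, 1 < ‖f w‖) : ‖f z‖ = 1 := by
  have hzs : z ∈ sphere (0 : ℂ) 1 := by simpa using hz
  have := nhdsWithin_ball_neBot_of_mem_sphere_s12 one_ne_zero hzs
  have := nhdsWithin_compl_closedBall_neBot_of_mem_sphere_s12 one_ne_zero hzs
  have hlim : ∀ s : Set ℂ, Tendsto (‖f ·‖) (𝓝[s] z) (𝓝 ‖f z‖) := fun s =>
    hf.norm.tendsto.mono_left nhdsWithin_le_nhds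
  exact le_antisymm (le_of_tendsto (hlim _) (hlt.mono fun _ => le_of_lt))
    (ge_of_tendsto (hlim _) (hgt.mono fun _ => le_of_lt))

theorem re_mul_pow_nonneg_of_modulus_separation {h : ℂ → ℂ} {n : ℕ} (hn : n ≠ 0)
    (hz : ‖z‖ = 1) (hfz : ‖f z‖ = 1) (hgt : ∀ᶠ w in 𝓝[(closedBall 0 1)ᶜ] z, 1 < ‖f w‖)
    (hh : ContinuousAt h z) (hfh : ∀ᶠ w in 𝓝 z, f w - f z = (w - z) ^ n • h w)
    (e : ℂ) (he : 0 < e.re) : 0 ≤ (conj (f z) * z ^ n * h z * e ^ n).re := by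
  set γ : ℝ → ℂ := fun t => z + t * (z * e)
  have hγ : Tendsto γ (𝓝[>] 0) (𝓝[(closedBall 0 1)ᶜ] z) := by
    refine tendsto_nhdsWithin_iff.2 ⟨?_, ?_⟩
    · exact ((by fun_prop : Continuous γ).tendsto' 0 z (by simp [γ])).mono_left
        nhdsWithin_le_nhds
    · filter_upwards [self_mem_nhdsWithin] with t (ht : 0 < t)
      have : 1 < (1 + t * e).re := by
        simp only [add_re, one_re, re_ofReal_mul]; nlinarith
      have hnorm : ‖γ t‖ = ‖1 + t * e‖ := by
        rw [show γ t = z * (1 + t * e) by simp only [γ]; ring, norm_mul, hz, one_mul]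
      simpa [hnorm] using this.trans_le (re_le_norm _)
  have hγz : Tendsto γ (𝓝[>] 0) (𝓝 z) := hγ.mono_right nhdsWithin_le_nhds
  have hinner := inner_nonneg_of_norm_le_norm_add_smul (a := f z) (s := fun t : ℝ => t ^ n)
    (x := fun t => (z * e) ^ n * h (γ t))
    (((continuous_pow n).tendsto' 0 0 (zero_pow hn)).mono_left nhdsWithin_le_nhds)
    (by filter_upwards [self_mem_nhdsWithin] with t (ht : 0 < t) using pow_pos ht n)
    ((hh.tendsto.comp hγz).const_mul _)
    (by
      filter_upwards [hγ.eventually hgt, hγz.eventually hfh] with t hlt hft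
      simp only [γ, add_sub_cancel_left, smul_eq_mul] at hft
      have hexp : f z + (t ^ n) • ((z * e) ^ n * h (γ t)) = f (γ t) := by
        rw [Complex.real_smul]; push_cast
        linear_combination -hft
      rw [hfz, hexp]
      exact hlt.le)
  rw [Complex.inner] at hinner
  convert hinner using 2
  ring

theorem deriv_ne_zero_of_modulus_separation_s12 (hf : AnalyticAt ℂ f z) (hz : ‖z‖ = 1)
    (hlt : ∀ᶠ w in 𝓝[ball 0 1] z, ‖f w‖ < 1)
    (hgt : ∀ᶠ w in 𝓝[(closedBall 0 1)ᶜ] z, 1 < ‖f w‖) : deriv f z ≠ 0 := by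
  intro hderiv
  have hfz := norm_eq_one_of_modulus_separation hf.continuousAt hz hlt hgt
  have hnonconst : analyticOrderAt (f · - f z) z ≠ ⊤ := by
    rw [Ne, analyticOrderAt_eq_top]
    intro hconst
    have := nhdsWithin_ball_neBot_of_mem_sphere_s12 one_ne_zero (by simpa using hz : z ∈ sphere 0 1)
    obtain ⟨w, hw, hwz⟩ := (hlt.and (hconst.filter_mono nhdsWithin_le_nhds)).exists
    rw [sub_eq_zero.1 hwz, hfz] at hw
    exact lt_irrefl _ hw
  obtain ⟨n, hn⟩ := ENat.ne_top_iff_exists.1 hnonconst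
  have hn2 : 2 ≤ n := by
    have h1 : 1 ≤ analyticOrderAt (deriv f) z :=
      Order.one_le_iff_ne_zero.2 (analyticOrderAt_ne_zero.2 ⟨hf.deriv, hderiv⟩)
    have := hf.analyticOrderAt_deriv_add_one
    rw [← hn] at this
    have : (2 : ℕ∞) ≤ n := by rw [← this, ← one_add_one_eq_two]; exact add_le_add h1 le_rfl
    exact_mod_cast this
  obtain ⟨h, hha, hhz, hfh⟩ := (hf.sub analyticAt_const).analyticOrderAt_eq_natCast.1 hn.symm
  have hC := Complex.eq_zero_of_re_mul_pow_nonneg hn2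
    (re_mul_pow_nonneg_of_modulus_separation (by omega) hz hfz hgt hha.continuousAt hfh)
  have hz0 : z ≠ 0 := by rintro rfl; simp at hz
  have hfz0 : f z ≠ 0 := by intro h0; simp [h0] at hfz
  simp [hz0, hfz0, hhz] at hC

end ModulusSeparation

theorem locally_injective_of_modulus_separation_general (f : ℂ → ℂ) (J U : Set ℂ)
    (hJs : J ⊆ Metric.sphere (0:ℂ) 1)
    (hU : IsOpen U) (hJU : J ⊆ U)
    (hf : DifferentiableOn ℂ f U)
    (hlt : ∀ w ∈ U ∩ Metric.ball (0:ℂ) 1, ‖f w‖ < 1)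
    (hgt : ∀ w ∈ U \ Metric.closedBall (0:ℂ) 1, 1 < ‖f w‖) :
    ∀ z ∈ J, ∃ V : Set ℂ, IsOpen V ∧ z ∈ V ∧ V ⊆ U ∧ Set.InjOn f V := by
  intro z hzJ
  have hz : ‖z‖ = 1 := by simpa using hJs hzJ
  have hUz : U ∈ 𝓝 z := hU.mem_nhds (hJU hzJ)
  have hfz : AnalyticAt ℂ f z := hf.analyticAt hUz
  have hlt' : ∀ᶠ w in 𝓝[ball 0 1] z, ‖f w‖ < 1 := by
    filter_upwards [self_mem_nhdsWithin, mem_nhdsWithin_of_mem_nhds hUz] with w hw hwU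
    exact hlt w ⟨hwU, hw⟩
  have hgt' : ∀ᶠ w in 𝓝[(closedBall 0 1)ᶜ] z, 1 < ‖f w‖ := by
    filter_upwards [self_mem_nhdsWithin, mem_nhdsWithin_of_mem_nhds hUz] with w hw hwU
    exact hgt w ⟨hwU, hw⟩
  exact hfz.hasStrictDerivAt.exists_isOpen_mem_subset_injOn
    (deriv_ne_zero_of_modulus_separation_s12 hfz hz hlt' hgt') hUz

theorem locally_injective_of_modulus_separation (f : ℂ → ℂ) (J U : Set ℂ)
    (hJs : J ⊆ Metric.sphere (0:ℂ) 1) (hJconn : IsConnected J)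
    (hJopen : ∃ V : Set ℂ, IsOpen V ∧ J = Metric.sphere (0:ℂ) 1 ∩ V)
    (hU : IsOpen U) (hUconn : IsConnected U) (hJU : J ⊆ U)
    (hf : DifferentiableOn ℂ f U)
    (hlt : ∀ w ∈ U ∩ Metric.ball (0:ℂ) 1, ‖f w‖ < 1)
    (hgt : ∀ w ∈ U \ Metric.closedBall (0:ℂ) 1, 1 < ‖f w‖) :
    ∀ z ∈ J, ∃ V : Set ℂ, IsOpen V ∧ z ∈ V ∧ V ⊆ U ∧ Set.InjOn f V :=
  locally_injective_of_modulus_separation_general f J U hJs hU hJU hf hlt hgt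
end
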